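/- Assume in addition that σ₀²‖h₀‖² > σ_l²τ_l‖h_l‖² for every l = 1,…,N. Fix j and define f_R(v) = SIR_j(Γ_R(v)) and f_E(v) = SIR_j(Γ_E(v)) for v > 0. Then f_R and f_E are differentiable on (0,∞) and for every v > 0 one has f_R′(v) < f_E′(v) < 0; i.e., both output SIRs strictly decrease in the noise power, and the Riemannian SIR decreases strictly faster than the Euclidean one. -/

import Mathlib

open Matrix Finset Filter Topology

noncomputable section

/-- squared Euclidean norm of a complex vector. -/
def nsq {M : ℕ} (x : Fin M → ℂ) : ℝ := ∑ i, Complex.normSq (x i)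

/-- outer product `x x*`. -/
def outerP {M : ℕ} (x : Fin M → ℂ) : Matrix (Fin M) (Fin M) ℂ :=
  Matrix.vecMulVec x (star x)

/-- the (real) quadratic form `d* A d`. -/
def quadForm {M : ℕ} (d : Fin M → ℂ) (A : Matrix (Fin M) (Fin M) ℂ) : ℝ :=
  (star d ⬝ᵥ (A *ᵥ d)).re

/-- `Γ(c, v) = σ₀² h₀h₀* + ∑ l, c_l h_l h_l* + v I`.  Index `0` is the desired source and
index `l.succ` is the `l`-th interference. -/
def Gam {M N : ℕ} (h : Fin (N + 1) → Fin M → ℂ) (σ0sq : ℝ) (c : Fin N → ℝ) (v : ℝ) :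
    Matrix (Fin M) (Fin M) ℂ :=
  σ0sq • outerP (h 0) + ∑ l : Fin N, c l • outerP (h l.succ)
    + v • (1 : Matrix (Fin M) (Fin M) ℂ)

/-- output SIR toward interference `j`: `q(d₀, Γ) / q(d_j, Γ)`. -/
def SIRj {M N : ℕ} (d : Fin (N + 1) → Fin M → ℂ) (j : Fin N)
    (A : Matrix (Fin M) (Fin M) ℂ) : ℝ :=
  quadForm (d 0) A / quadForm (d j.succ) A

/-- the Riemannian interference coefficients
`c_l^R(v) = ((σ_l²‖h_l‖² + v)^{τ_l} v^{1-τ_l} - v)/‖h_l‖²`. -/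
def cRcoef {M N : ℕ} (h : Fin (N + 1) → Fin M → ℂ) (σsq τ : Fin N → ℝ) (v : ℝ)
    (l : Fin N) : ℝ :=
  ((σsq l * nsq (h l.succ) + v) ^ (τ l) * v ^ (1 - τ l) - v) / nsq (h l.succ)

lemma amgm_strict {x s : ℝ} (hx : 1 < x) (hs0 : 0 < s) (hs1 : s < 1) :
    x ^ s < s * x + (1 - s) := by
  have h := rpow_one_add_lt_one_add_mul_self (s := x - 1) (by linarith) (by linarith)
    hs0 hs1
  rw [show (1 : ℝ) + (x - 1) = x by ring] at h
  linarith

lemma nsq_pos {M : ℕ} {x : Fin M → ℂ} (hx : x ≠ 0) : 0 < nsq x := by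
  obtain ⟨i, hi⟩ := Function.ne_iff.1 hx
  exact Finset.sum_pos' (fun j _ => Complex.normSq_nonneg _)
    ⟨i, Finset.mem_univ i, by simpa using Complex.normSq_pos.2 hi⟩

lemma quadForm_outerP {M : ℕ} (d x : Fin M → ℂ) :
    quadForm d (outerP x) = ‖star d ⬝ᵥ x‖ ^ 2 := by
  have hmv : outerP x *ᵥ d = (star x ⬝ᵥ d) • x := by
    ext i
    simp [outerP, Matrix.mulVec, Matrix.vecMulVec_apply, dotProduct, Finset.mul_sum,
      mul_comm, mul_left_comm, mul_assoc]
  have hsd : star x ⬝ᵥ d = star (star d ⬝ᵥ x) := by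
    simp [dotProduct, star_sum, mul_comm]
  rw [quadForm, hmv, dotProduct_smul, hsd]
  set z := star d ⬝ᵥ x
  have : star z • z = (Complex.normSq z : ℂ) := by
    simp [smul_eq_mul, Complex.normSq_eq_conj_mul_self, Complex.star_def]
  rw [this]
  simp [Complex.normSq_eq_norm_sq]
  norm_cast

lemma quadForm_add {M : ℕ} (d : Fin M → ℂ) (A B : Matrix (Fin M) (Fin M) ℂ) :
    quadForm d (A + B) = quadForm d A + quadForm d B := by
  simp [quadForm, Matrix.add_mulVec, dotProduct_add]

lemma quadForm_smul {M : ℕ} (d : Fin M → ℂ) (r : ℝ) (A : Matrix (Fin M) (Fin M) ℂ) :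
    quadForm d (r • A) = r * quadForm d A := by
  have : (r • A) *ᵥ d = (r : ℂ) • (A *ᵥ d) := by
    ext i; simp [Matrix.mulVec, dotProduct, Finset.smul_sum, Complex.real_smul,
      Finset.mul_sum, mul_assoc]
  rw [quadForm, this, dotProduct_smul]
  simp [quadForm, smul_eq_mul]

lemma quadForm_sum {M : ℕ} {ι : Type*} (d : Fin M → ℂ) (s : Finset ι)
    (A : ι → Matrix (Fin M) (Fin M) ℂ) :
    quadForm d (∑ l ∈ s, A l) = ∑ l ∈ s, quadForm d (A l) := by
  classical
  induction s using Finset.induction with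
  | empty => simp [quadForm]
  | insert a s hns ih => rw [Finset.sum_insert hns, quadForm_add, ih, Finset.sum_insert hns]

lemma quadForm_smul_one {M : ℕ} (d : Fin M → ℂ) (v : ℝ) :
    quadForm d (v • (1 : Matrix (Fin M) (Fin M) ℂ)) = v * nsq d := by
  rw [quadForm_smul]
  have : quadForm d (1 : Matrix (Fin M) (Fin M) ℂ) = nsq d := by
    rw [quadForm, Matrix.one_mulVec]
    simp [dotProduct, nsq, Complex.mul_re, Complex.normSq_apply]
  rw [this]

lemma bR_pos {P τ v : ℝ} (hP : 0 < P) (hv : 0 < v) (ht0 : 0 < τ) (ht1 : τ < 1) :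
    0 < (P + v) ^ τ * v ^ (1 - τ) - v := by
  have h1 : v ^ τ < (P + v) ^ τ :=
    Real.rpow_lt_rpow hv.le (by linarith) ht0
  have h2 : (0:ℝ) < v ^ (1 - τ) := Real.rpow_pos_of_pos hv _
  have h3 : v ^ τ * v ^ (1 - τ) = v := by
    rw [← Real.rpow_add hv, show τ + (1 - τ) = 1 by ring, Real.rpow_one]
  nlinarith [mul_lt_mul_of_pos_right h1 h2]

lemma bR_lt {P τ v : ℝ} (hP : 0 < P) (hv : 0 < v) (ht0 : 0 < τ) (ht1 : τ < 1) :
    (P + v) ^ τ * v ^ (1 - τ) - v < τ * P := by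
  have hx : 1 < (P + v) / v := (one_lt_div hv).2 (by linarith)
  have hc := amgm_strict hx ht0 ht1
  have hvτ : (0:ℝ) < v ^ τ := Real.rpow_pos_of_pos hv _
  have heq : ((P + v) / v) ^ τ * v = (P + v) ^ τ * v ^ (1 - τ) := by
    rw [Real.div_rpow (by linarith) hv.le, Real.rpow_sub hv, Real.rpow_one]
    field_simp
  have := mul_lt_mul_of_pos_right hc hv
  rw [heq] at this
  have : (τ * ((P + v) / v) + (1 - τ)) * v = τ * (P + v) + (1 - τ) * v := by
    field_simp
  nlinarith [mul_lt_mul_of_pos_right hc hv, heq]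

lemma bR_hasDeriv (P τ : ℝ) (hP : 0 < P) {v : ℝ} (hv : 0 < v) (ht0 : 0 < τ) (ht1 : τ < 1) :
    ∃ D : ℝ, 0 < D ∧ HasDerivAt (fun w => (P + w) ^ τ * w ^ (1 - τ) - w) D v := by
  have hu : 0 < P + v := by linarith
  have h1 : HasDerivAt (fun w : ℝ => (P + w) ^ τ) (1 * τ * (P + v) ^ (τ - 1)) v :=
    HasDerivAt.rpow_const ((hasDerivAt_id v).const_add P) (Or.inl hu.ne')
  have h2 : HasDerivAt (fun w : ℝ => w ^ (1 - τ)) ((1 - τ) * v ^ (1 - τ - 1)) v :=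
    Real.hasDerivAt_rpow_const (Or.inl hv.ne')
  have hD : HasDerivAt (fun w => (P + w) ^ τ * w ^ (1 - τ) - w)
      (1 * τ * (P + v) ^ (τ - 1) * v ^ (1 - τ) + (P + v) ^ τ * ((1 - τ) * v ^ (1 - τ - 1)) - 1)
      v := (h1.mul h2).sub (hasDerivAt_id v)
  refine ⟨_, ?_, hD⟩
  -- positivity of the derivative
  have hx : 1 < (P + v) / v := (one_lt_div hv).2 (by linarith)
  have hc := amgm_strict hx (by linarith : (0:ℝ) < 1 - τ) (by linarith : (1:ℝ) - τ < 1)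
  rw [show (1:ℝ) - (1 - τ) = τ by ring] at hc
  have hxp : (0:ℝ) < ((P + v) / v) ^ (1 - τ) := Real.rpow_pos_of_pos (by positivity) _
  have key : 1 < ((1 - τ) * ((P + v) / v) + τ) / ((P + v) / v) ^ (1 - τ) :=
    (one_lt_div hxp).2 hc
  have huτ : (0:ℝ) < (P + v) ^ τ := Real.rpow_pos_of_pos hu _
  have hvτ : (0:ℝ) < v ^ τ := Real.rpow_pos_of_pos hv _
  have heq : τ * (P + v) ^ (τ - 1) * v ^ (1 - τ) + (P + v) ^ τ * ((1 - τ) * v ^ (1 - τ - 1))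
      = ((1 - τ) * ((P + v) / v) + τ) / ((P + v) / v) ^ (1 - τ) := by
    rw [show (1:ℝ) - τ - 1 = -τ by ring, Real.rpow_neg hv.le,
      Real.div_rpow hu.le hv.le, Real.rpow_sub hu τ 1, Real.rpow_sub hu 1 τ,
      Real.rpow_sub hv 1 τ]
    simp only [Real.rpow_one]
    field_simp
    ring
  rw [one_mul]
  linarith [heq ▸ key]

set_option maxHeartbeats 1000000 in
lemma scalar_main (N : ℕ) (A : ℝ) (hA : 0 < A) (B τ : Fin N → ℝ)
    (hB : ∀ l, 0 < B l) (hτ : ∀ l, τ l ∈ Set.Ioo (0 : ℝ) 1)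
    (κ ρ : ℝ) (hρ : 0 ≤ ρ) (hκρ : ρ < κ)
    (hdom : ∀ l, τ l * B l < A) (j : Fin N) (v : ℝ) (hv : 0 < v)
    (gR gE : ℝ → ℝ)
    (hgR : gR = fun w => (κ * A + ρ * (∑ l, ((B l + w) ^ (τ l) * w ^ (1 - τ l) - w)) + w) /
        (ρ * A + ρ * (∑ l, ((B l + w) ^ (τ l) * w ^ (1 - τ l) - w))
          + (κ - ρ) * ((B j + w) ^ (τ j) * w ^ (1 - τ j) - w) + w))
    (hgE : gE = fun w => (κ * A + ρ * (∑ l, τ l * B l) + w) /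
        (ρ * A + ρ * (∑ l, τ l * B l) + (κ - ρ) * (τ j * B j) + w)) :
    DifferentiableAt ℝ gR v ∧ DifferentiableAt ℝ gE v ∧
      deriv gR v < deriv gE v ∧ deriv gE v < 0 := by
  subst hgR hgE
  have hκ : 0 < κ - ρ := by linarith
  -- basic positivity
  have hbpos : ∀ l, 0 < (B l + v) ^ (τ l) * v ^ (1 - τ l) - v :=
    fun l => bR_pos (hB l) hv (hτ l).1 (hτ l).2
  have hblt : ∀ l, (B l + v) ^ (τ l) * v ^ (1 - τ l) - v < τ l * B l :=
    fun l => bR_lt (hB l) hv (hτ l).1 (hτ l).2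
  have hbE : ∀ l, 0 < τ l * B l := fun l => mul_pos (hτ l).1 (hB l)
  set SE : ℝ := ∑ l, τ l * B l with hSEdef
  clear_value SE
  have hSE : 0 ≤ SE := by rw [hSEdef]; exact Finset.sum_nonneg fun l _ => (hbE l).le
  set SR : ℝ := ∑ l, ((B l + v) ^ (τ l) * v ^ (1 - τ l) - v) with hSRdef
  clear_value SR
  have hSR : 0 ≤ SR := by rw [hSRdef]; exact Finset.sum_nonneg fun l _ => (hbpos l).le
  have hSRE : SR ≤ SE := by rw [hSRdef, hSEdef]; exact Finset.sum_le_sum fun l _ => (hblt l).le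
  set bj : ℝ := (B j + v) ^ (τ j) * v ^ (1 - τ j) - v with hbjdef
  clear_value bj
  have hbjpos : 0 < bj := by rw [hbjdef]; exact hbpos j
  have hbjlt : bj < τ j * B j := by rw [hbjdef]; exact hblt j
  -- derivatives of the Riemannian coefficients
  choose D hDpos hDder using fun l => bR_hasDeriv (B l) (τ l) (hB l) hv (hτ l).1 (hτ l).2
  have hS : HasDerivAt (fun w => ∑ l, ((B l + w) ^ (τ l) * w ^ (1 - τ l) - w)) (∑ l, D l) v :=
    HasDerivAt.fun_sum fun l _ => hDder l
  set SD : ℝ := ∑ l, D l with hSDdef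
  clear_value SD
  have hSD : 0 ≤ SD := by rw [hSDdef]; exact Finset.sum_nonneg fun l _ => (hDpos l).le
  -- Euclidean function
  have hNumE : HasDerivAt (fun w : ℝ => κ * A + ρ * SE + w) 1 v := by
    simpa using (hasDerivAt_id v).const_add (κ * A + ρ * SE)
  have hDenE : HasDerivAt (fun w : ℝ => ρ * A + ρ * SE + (κ - ρ) * (τ j * B j) + w) 1 v := by
    simpa using (hasDerivAt_id v).const_add (ρ * A + ρ * SE + (κ - ρ) * (τ j * B j))
  have hdenE : 0 < ρ * A + ρ * SE + (κ - ρ) * (τ j * B j) + v := by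
    have := mul_pos hκ (hbE j)
    nlinarith [mul_nonneg hρ hA.le, mul_nonneg hρ hSE]
  have hE : HasDerivAt (fun w : ℝ => (κ * A + ρ * SE + w) /
      (ρ * A + ρ * SE + (κ - ρ) * (τ j * B j) + w))
      ((1 * (ρ * A + ρ * SE + (κ - ρ) * (τ j * B j) + v)
        - (κ * A + ρ * SE + v) * 1) / (ρ * A + ρ * SE + (κ - ρ) * (τ j * B j) + v) ^ 2) v :=
    hNumE.div hDenE hdenE.ne'
  -- Riemannian function
  have hNumR : HasDerivAt (fun w : ℝ =>
      κ * A + ρ * (∑ l, ((B l + w) ^ (τ l) * w ^ (1 - τ l) - w)) + w) (ρ * SD + 1) v := by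
    simpa using ((HasDerivAt.const_mul ρ hS).const_add (κ * A)).fun_add (hasDerivAt_id v)
  have hDenR : HasDerivAt (fun w : ℝ =>
      ρ * A + ρ * (∑ l, ((B l + w) ^ (τ l) * w ^ (1 - τ l) - w))
        + (κ - ρ) * ((B j + w) ^ (τ j) * w ^ (1 - τ j) - w) + w)
      (ρ * SD + (κ - ρ) * D j + 1) v := by
    simpa using (((HasDerivAt.const_mul ρ hS).const_add (ρ * A)).fun_add
      (HasDerivAt.const_mul (κ - ρ) (hDder j))).fun_add (hasDerivAt_id v)
  have hdenR : 0 < ρ * A + ρ * SR + (κ - ρ) * bj + v := by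
    nlinarith [mul_nonneg hρ hA.le, mul_nonneg hρ hSR, mul_pos hκ hbjpos]
  have hnumR : 0 < κ * A + ρ * SR + v := by
    nlinarith [mul_nonneg hρ hSR, mul_pos (hρ.trans_lt hκρ) hA]
  have hR : HasDerivAt (fun w : ℝ =>
      (κ * A + ρ * (∑ l, ((B l + w) ^ (τ l) * w ^ (1 - τ l) - w)) + w) /
      (ρ * A + ρ * (∑ l, ((B l + w) ^ (τ l) * w ^ (1 - τ l) - w))
        + (κ - ρ) * ((B j + w) ^ (τ j) * w ^ (1 - τ j) - w) + w))
      (((ρ * SD + 1) * (ρ * A + ρ * SR + (κ - ρ) * bj + v)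
        - (κ * A + ρ * SR + v) * (ρ * SD + (κ - ρ) * D j + 1))
        / (ρ * A + ρ * SR + (κ - ρ) * bj + v) ^ 2) v := by
    have := hNumR.fun_div hDenR (by rw [← hSRdef, ← hbjdef] at *; exact hdenR.ne')
    rw [hSRdef, hbjdef]; exact this
  refine ⟨hR.differentiableAt, hE.differentiableAt, ?_, ?_⟩
  · rw [hR.deriv, hE.deriv]
    have key2 : (ρ * SD + 1) * (ρ * A + ρ * SR + (κ - ρ) * bj + v)
        - (κ * A + ρ * SR + v) * (ρ * SD + (κ - ρ) * D j + 1)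
        = -((ρ * SD + 1) * ((κ - ρ) * (A - bj)) + (κ * A + ρ * SR + v) * ((κ - ρ) * D j)) := by
      ring
    have key1 : 1 * (ρ * A + ρ * SE + (κ - ρ) * (τ j * B j) + v) - (κ * A + ρ * SE + v) * 1
        = -((κ - ρ) * (A - τ j * B j)) := by ring
    rw [key1, key2, neg_div, neg_div, neg_lt_neg_iff]
    have hY : 0 < (κ - ρ) * (A - τ j * B j) := mul_pos hκ (by linarith [hdom j])
    have hYX : (κ - ρ) * (A - τ j * B j)
        < (ρ * SD + 1) * ((κ - ρ) * (A - bj)) + (κ * A + ρ * SR + v) * ((κ - ρ) * D j) := by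
      have h1 : (κ - ρ) * (A - τ j * B j) < (κ - ρ) * (A - bj) :=
        mul_lt_mul_of_pos_left (by linarith) hκ
      have h2 : 0 ≤ ρ * SD * ((κ - ρ) * (A - bj)) :=
        mul_nonneg (mul_nonneg hρ hSD) (mul_nonneg hκ.le (by linarith [hdom j]))
      nlinarith [mul_pos hnumR (mul_pos hκ (hDpos j))]
    have hdRE : ρ * A + ρ * SR + (κ - ρ) * bj + v
        < ρ * A + ρ * SE + (κ - ρ) * (τ j * B j) + v := by
      have h3 := mul_le_mul_of_nonneg_left hSRE hρ
      have h4 := mul_lt_mul_of_pos_left hbjlt hκ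
      linarith
    have hsq : (ρ * A + ρ * SR + (κ - ρ) * bj + v) ^ 2
        < (ρ * A + ρ * SE + (κ - ρ) * (τ j * B j) + v) ^ 2 := by nlinarith
    calc (κ - ρ) * (A - τ j * B j) / (ρ * A + ρ * SE + (κ - ρ) * (τ j * B j) + v) ^ 2
        < (κ - ρ) * (A - τ j * B j) / (ρ * A + ρ * SR + (κ - ρ) * bj + v) ^ 2 :=
          div_lt_div_of_pos_left hY (by positivity) hsq
      _ < ((ρ * SD + 1) * ((κ - ρ) * (A - bj)) + (κ * A + ρ * SR + v) * ((κ - ρ) * D j))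
            / (ρ * A + ρ * SR + (κ - ρ) * bj + v) ^ 2 := by
          exact (div_lt_div_iff_of_pos_right (by positivity)).2 hYX

  · rw [hE.deriv]
    apply div_neg_of_neg_of_pos
    · nlinarith [mul_pos hκ (show 0 < A - τ j * B j by linarith [hdom j])]
    · positivity


lemma quadForm_Gam {M N : ℕ} (h : Fin (N + 1) → Fin M → ℂ) (σ0sq : ℝ) (c : Fin N → ℝ)
    (w : ℝ) (e : Fin M → ℂ) :
    quadForm e (Gam h σ0sq c w)
      = σ0sq * ‖star e ⬝ᵥ h 0‖ ^ 2 + (∑ l, c l * ‖star e ⬝ᵥ h l.succ‖ ^ 2) + w * nsq e := by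
  rw [Gam, quadForm_add, quadForm_add, quadForm_smul, quadForm_outerP, quadForm_sum,
    quadForm_smul_one]
  congr 1
  congr 1
  exact Finset.sum_congr rfl fun l _ => by rw [quadForm_smul, quadForm_outerP]

/-- If `σ₀²‖h₀‖² > σ_l² τ_l ‖h_l‖²` for every `l`, then the output SIRs
`f_R(v) = SIR_j(Γ_R(v))` and `f_E(v) = SIR_j(Γ_E(v))` are differentiable on `(0,∞)` and
satisfy `f_R′(v) < f_E′(v) < 0` there: both strictly decrease in the noise power, and the
Riemannian SIR decreases strictly faster. -/
theorem riemannian_SIR_derivative_lt_euclidean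
    (M N : ℕ) (hM : 1 ≤ M) (hN : 1 ≤ N)
    (h : Fin (N + 1) → Fin M → ℂ)
    (hnz : ∀ r, h r ≠ 0)
    (horth : ∀ r s, r ≠ s → star (h r) ⬝ᵥ h s = 0)
    (d : Fin (N + 1) → Fin M → ℂ)
    (κ ρ : ℝ) (hρ : 0 ≤ ρ) (hκρ : ρ < κ)
    (hd : ∀ r, nsq (d r) = M)
    (hdr : ∀ r, ‖star (d r) ⬝ᵥ h r‖ ^ 2 = κ * M * nsq (h r))
    (hds : ∀ r s, r ≠ s → ‖star (d r) ⬝ᵥ h s‖ ^ 2 = ρ * M * nsq (h s))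
    (σ0sq : ℝ) (hσ0 : 0 < σ0sq)
    (σsq : Fin N → ℝ) (hσ : ∀ l, 0 < σsq l)
    (τ : Fin N → ℝ) (hτ : ∀ l, τ l ∈ Set.Ioo (0 : ℝ) 1)
    (hdom : ∀ l, σsq l * τ l * nsq (h l.succ) < σ0sq * nsq (h 0))
    (j : Fin N)
    (fR fE : ℝ → ℝ)
    (hfR : fR = fun v => SIRj d j (Gam h σ0sq (cRcoef h σsq τ v) v))
    (hfE : fE = fun v => SIRj d j (Gam h σ0sq (fun l => σsq l * τ l) v)) :
    ∀ v : ℝ, 0 < v →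
      DifferentiableAt ℝ fR v ∧ DifferentiableAt ℝ fE v ∧
      deriv fR v < deriv fE v ∧ deriv fE v < 0 := by
  subst hfR hfE
  have hn0 : 0 < nsq (h 0) := nsq_pos (hnz 0)
  have hn : ∀ l : Fin N, 0 < nsq (h l.succ) := fun l => nsq_pos (hnz _)
  have hM0 : (0:ℝ) < (M:ℝ) := by exact_mod_cast hM
  have hq : ∀ (c : Fin N → ℝ) (w : ℝ), SIRj d j (Gam h σ0sq c w)
      = (κ * (σ0sq * nsq (h 0)) + ρ * (∑ l, c l * nsq (h l.succ)) + w) /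
        (ρ * (σ0sq * nsq (h 0)) + ρ * (∑ l, c l * nsq (h l.succ))
          + (κ - ρ) * (c j * nsq (h j.succ)) + w) := by
    intro c w
    have e0 : quadForm (d 0) (Gam h σ0sq c w)
        = (M:ℝ) * (κ * (σ0sq * nsq (h 0)) + ρ * (∑ l, c l * nsq (h l.succ)) + w) := by
      rw [quadForm_Gam, hdr 0, hd 0]
      have hc : ∀ l ∈ Finset.univ, c l * ‖star (d 0) ⬝ᵥ h l.succ‖ ^ 2
          = (ρ * (M:ℝ)) * (c l * nsq (h l.succ)) := by
        intro l _
        rw [hds 0 l.succ (Fin.succ_ne_zero l).symm]; ring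
      rw [Finset.sum_congr rfl hc, ← Finset.mul_sum]
      ring
    have ej : quadForm (d j.succ) (Gam h σ0sq c w)
        = (M:ℝ) * (ρ * (σ0sq * nsq (h 0)) + ρ * (∑ l, c l * nsq (h l.succ))
            + (κ - ρ) * (c j * nsq (h j.succ)) + w) := by
      rw [quadForm_Gam, hds j.succ 0 (Fin.succ_ne_zero j), hd]
      have hc : ∀ l ∈ Finset.univ, c l * ‖star (d j.succ) ⬝ᵥ h l.succ‖ ^ 2
          = (ρ * (M:ℝ)) * (c l * nsq (h l.succ))
            + (if l = j then ((κ - ρ) * (M:ℝ)) * (c l * nsq (h l.succ)) else 0) := by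
        intro l _
        by_cases hlj : l = j
        · subst hlj
          rw [hdr l.succ]
          simp only [if_pos]
          ring
        · rw [hds j.succ l.succ (fun hh => hlj (Fin.succ_injective _ hh).symm)]
          simp only [if_neg hlj]
          ring
      rw [Finset.sum_congr rfl hc, Finset.sum_add_distrib, ← Finset.mul_sum,
        Finset.sum_ite_eq' Finset.univ j, if_pos (Finset.mem_univ j)]
      ring
    rw [SIRj, e0, ej, mul_div_mul_left _ _ (ne_of_gt hM0)]
  have hfReq : (fun w => SIRj d j (Gam h σ0sq (cRcoef h σsq τ w) w))
      = fun w => (κ * (σ0sq * nsq (h 0))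
            + ρ * (∑ l, ((σsq l * nsq (h l.succ) + w) ^ (τ l) * w ^ (1 - τ l) - w)) + w) /
          (ρ * (σ0sq * nsq (h 0))
            + ρ * (∑ l, ((σsq l * nsq (h l.succ) + w) ^ (τ l) * w ^ (1 - τ l) - w))
            + (κ - ρ) * ((σsq j * nsq (h j.succ) + w) ^ (τ j) * w ^ (1 - τ j) - w) + w) := by
    funext w
    rw [hq]
    have hcn : ∀ l ∈ Finset.univ, cRcoef h σsq τ w l * nsq (h l.succ)
        = (σsq l * nsq (h l.succ) + w) ^ (τ l) * w ^ (1 - τ l) - w := fun l _ =>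
      div_mul_cancel₀ _ (hn l).ne'
    rw [Finset.sum_congr rfl hcn, hcn j (Finset.mem_univ j)]
  have hfEeq : (fun w => SIRj d j (Gam h σ0sq (fun l => σsq l * τ l) w))
      = fun w => (κ * (σ0sq * nsq (h 0)) + ρ * (∑ l, τ l * (σsq l * nsq (h l.succ))) + w) /
          (ρ * (σ0sq * nsq (h 0)) + ρ * (∑ l, τ l * (σsq l * nsq (h l.succ)))
            + (κ - ρ) * (τ j * (σsq j * nsq (h j.succ))) + w) := by
    funext w
    rw [hq]
    have hcn : ∀ l ∈ Finset.univ, (σsq l * τ l) * nsq (h l.succ)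
        = τ l * (σsq l * nsq (h l.succ)) := fun l _ => by ring
    rw [Finset.sum_congr rfl hcn, hcn j (Finset.mem_univ j)]
  intro v hv
  exact scalar_main N (σ0sq * nsq (h 0)) (mul_pos hσ0 hn0)
    (fun l => σsq l * nsq (h l.succ)) τ (fun l => mul_pos (hσ l) (hn l)) hτ κ ρ hρ hκρ
    (fun l => by
      rw [show τ l * (σsq l * nsq (h l.succ)) = σsq l * τ l * nsq (h l.succ) from by ring]
      exact hdom l)
    j v hv _ _ hfReq hfEeq
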